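/- arXiv:1811.11704 — 2 statements merged into one kernel-verified Lean document; each statement's English description precedes it below -/
import Mathlib

section
/- Let $q : [0,\infty) \to [0,\infty)$ and $c : [0,\infty) \to [0,\infty)$ be measurable locally integrable functions, let $\lambda : [0,\infty) \to [0,\infty]$ be measurable, and let $V \geq 1$ be a constant. Suppose that for almost every $\tau \geq 0$, $\lambda(\tau) - (q(\tau) - c(\tau)) V \geq \delta$ for some $\delta \geq 0$. Then the function $t \mapsto \int_0^t e^{-\int_0^\tau (q(s) - c(s)) ds} \lambda(\tau) \, d\tau + e^{-\int_0^t (q(s) - c(s)) ds} V$ is monotone nondecreasing on $[0, \infty)$. -/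
open MeasureTheory
open scoped ENNReal

lemma exp_neg_diff_le {K x y : ℝ} (hx : |x| ≤ K) (hxy : |x - y| ≤ 1) :
    |Real.exp (-x) - Real.exp (-y)| ≤ 2 * Real.exp (K + 1) * |x - y| := by
  have h1 : Real.exp (-x) - Real.exp (-y) = Real.exp (-y) * (Real.exp (y - x) - 1) := by
    rw [mul_sub, mul_one, ← Real.exp_add]
    ring_nf
  have h2 : |Real.exp (y - x) - 1| ≤ 2 * |y - x| :=
    Real.abs_exp_sub_one_le (by rwa [abs_sub_comm])
  have h3 : Real.exp (-y) ≤ Real.exp (K + 1) := by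
    apply Real.exp_le_exp.2
    have h4 := abs_le.1 hx
    have h5 := abs_le.1 hxy
    linarith [h4.1, h4.2, h5.1, h5.2]
  calc |Real.exp (-x) - Real.exp (-y)|
      = Real.exp (-y) * |Real.exp (y - x) - 1| := by
        rw [h1, abs_mul, abs_of_pos (Real.exp_pos _)]
    _ ≤ Real.exp (K + 1) * (2 * |x - y|) := by
        rw [abs_sub_comm y x] at h2
        exact mul_le_mul h3 h2 (abs_nonneg _) (Real.exp_pos _).le
    _ = 2 * Real.exp (K + 1) * |x - y| := by ring

lemma key_cont (v : ℝ → ℝ) (hv : Integrable v) (hc : Continuous v) (a b : ℝ) :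
    ∫ τ in a..b, v τ * Real.exp (-(∫ s in (0:ℝ)..τ, v s))
      = Real.exp (-(∫ s in (0:ℝ)..a, v s)) - Real.exp (-(∫ s in (0:ℝ)..b, v s)) := by
  set F : ℝ → ℝ := fun u => ∫ s in (0:ℝ)..u, v s with hF
  have hFd : ∀ τ : ℝ, HasDerivAt F (v τ) τ := fun τ =>
    intervalIntegral.integral_hasDerivAt_right hv.intervalIntegrable
      (hc.stronglyMeasurableAtFilter _ _) hc.continuousAt
  have hFc : Continuous F :=
    intervalIntegral.continuous_primitive (fun a b => hv.intervalIntegrable) 0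
  have hGd : ∀ τ : ℝ, HasDerivAt (fun u => Real.exp (-F u))
      (Real.exp (-F τ) * (-v τ)) τ := fun τ => ((hFd τ).neg).exp
  have hcont : Continuous fun τ => Real.exp (-F τ) * (-v τ) :=
    (Real.continuous_exp.comp hFc.neg).mul hc.neg
  have h := intervalIntegral.integral_eq_sub_of_hasDerivAt
    (f := fun u => Real.exp (-F u)) (f' := fun τ => Real.exp (-F τ) * (-v τ))
    (fun τ _ => hGd τ) (hcont.intervalIntegrable a b)
  have hcongr : (∫ τ in a..b, v τ * Real.exp (-F τ))
      = ∫ τ in a..b, -(Real.exp (-F τ) * (-v τ)) :=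
    intervalIntegral.integral_congr (fun τ _ => by ring)
  rw [hcongr, intervalIntegral.integral_neg, h]
  ring

lemma key (w : ℝ → ℝ) (hw : Integrable w (volume : Measure ℝ)) (a b : ℝ) :
    ∫ τ in a..b, w τ * Real.exp (-(∫ s in (0:ℝ)..τ, w s))
      = Real.exp (-(∫ s in (0:ℝ)..a, w s)) - Real.exp (-(∫ s in (0:ℝ)..b, w s)) := by
  set K : ℝ := ∫ x, |w x| with hKdef
  have hK0 : 0 ≤ K := integral_nonneg fun x => abs_nonneg _
  set F : ℝ → ℝ := fun u => ∫ s in (0:ℝ)..u, w s with hF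
  have hFc : Continuous F :=
    intervalIntegral.continuous_primitive (fun a b => hw.intervalIntegrable) 0
  have hFabs : ∀ τ, |F τ| ≤ K := by
    intro τ
    have h1 : |F τ| ≤ ∫ s in Set.uIoc 0 τ, |w s| := by
      simpa [Real.norm_eq_abs] using
        intervalIntegral.norm_integral_le_integral_norm_uIoc (f := w) (a := (0:ℝ)) (b := τ)
          (μ := volume)
    exact h1.trans (setIntegral_le_integral hw.abs
      (Filter.Eventually.of_forall fun x => abs_nonneg _))
  set C : ℝ := Real.exp (K + 1) * (2 * K + 9) with hCdef
  have hC0 : 0 < C := by positivity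
  set A : ℝ := (∫ τ in a..b, w τ * Real.exp (-F τ))
      - (Real.exp (-F a) - Real.exp (-F b)) with hA
  have main : ∀ ε : ℝ, 0 < ε → ε ≤ 1 → |A| ≤ C * ε := by
    intro ε hε hε1
    obtain ⟨v, hvsupp, hvdist, hvc, hvi⟩ :=
      hw.exists_hasCompactSupport_integral_sub_le hε
    set Fv : ℝ → ℝ := fun u => ∫ s in (0:ℝ)..u, v s with hFv
    have hwv : Integrable (fun x => w x - v x) volume := hw.sub hvi
    have hdist' : ∫ x, |w x - v x| ≤ ε := by simpa [Real.norm_eq_abs] using hvdist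
    have hdiff : ∀ τ, |F τ - Fv τ| ≤ ε := by
      intro τ
      have hsub : F τ - Fv τ = ∫ s in (0:ℝ)..τ, (w s - v s) := by
        rw [intervalIntegral.integral_sub hw.intervalIntegrable hvi.intervalIntegrable]
      rw [hsub]
      have h1 : |∫ s in (0:ℝ)..τ, (w s - v s)| ≤ ∫ s in Set.uIoc 0 τ, |w s - v s| := by
        simpa [Real.norm_eq_abs] using
          intervalIntegral.norm_integral_le_integral_norm_uIoc
            (f := fun s => w s - v s) (a := (0:ℝ)) (b := τ) (μ := volume)
      exact h1.trans ((setIntegral_le_integral hwv.abs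
        (Filter.Eventually.of_forall fun x => abs_nonneg _)).trans hdist')
    have hexpd : ∀ τ, |Real.exp (-F τ) - Real.exp (-Fv τ)| ≤ 2 * Real.exp (K + 1) * ε := by
      intro τ
      have h1 := exp_neg_diff_le (hFabs τ) ((hdiff τ).trans hε1)
      have h2 : 2 * Real.exp (K + 1) * |F τ - Fv τ| ≤ 2 * Real.exp (K + 1) * ε :=
        mul_le_mul_of_nonneg_left (hdiff τ) (by positivity)
      linarith
    have hIvabs : ∫ x, |v x| ≤ K + 1 := by
      have h1 : ∀ x, |v x| ≤ |w x| + |w x - v x| := by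
        intro x
        have : v x = w x - (w x - v x) := by ring
        rw [this]
        simpa [Real.norm_eq_abs] using norm_sub_le (w x) (w x - v x)
      have h3 : ∫ x, |v x| ≤ ∫ x, (|w x| + |w x - v x|) :=
        integral_mono hvi.abs (hw.abs.add hwv.abs) h1
      rw [integral_add hw.abs hwv.abs] at h3
      linarith
    have hFvc : Continuous Fv :=
      intervalIntegral.continuous_primitive (fun a b => hvi.intervalIntegrable) 0
    have hIw : IntervalIntegrable (fun τ => w τ * Real.exp (-F τ)) volume a b :=
      hw.intervalIntegrable.mul_continuousOn (Real.continuous_exp.comp hFc.neg).continuousOn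
    have hIvv : IntervalIntegrable (fun τ => v τ * Real.exp (-Fv τ)) volume a b :=
      hvi.intervalIntegrable.mul_continuousOn (Real.continuous_exp.comp hFvc.neg).continuousOn
    set B : ℝ → ℝ := fun x => |w x - v x| * Real.exp K + |v x| * (2 * Real.exp (K + 1) * ε)
      with hB
    have hBint : Integrable B := (hwv.abs.mul_const _).add (hvi.abs.mul_const _)
    have hBnn : ∀ x, 0 ≤ B x := fun x => by positivity
    have hptw : ∀ x, |w x * Real.exp (-F x) - v x * Real.exp (-Fv x)| ≤ B x := by
      intro x
      have e1 : w x * Real.exp (-F x) - v x * Real.exp (-Fv x)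
          = (w x - v x) * Real.exp (-F x)
            + v x * (Real.exp (-F x) - Real.exp (-Fv x)) := by ring
      have e2 : Real.exp (-F x) ≤ Real.exp K :=
        Real.exp_le_exp.2 (by have := abs_le.1 (hFabs x); linarith [this.1])
      calc |w x * Real.exp (-F x) - v x * Real.exp (-Fv x)|
          = |(w x - v x) * Real.exp (-F x)
              + v x * (Real.exp (-F x) - Real.exp (-Fv x))| := by rw [e1]
        _ ≤ |(w x - v x) * Real.exp (-F x)|
              + |v x * (Real.exp (-F x) - Real.exp (-Fv x))| := abs_add_le _ _
        _ = |w x - v x| * Real.exp (-F x)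
              + |v x| * |Real.exp (-F x) - Real.exp (-Fv x)| := by
            rw [abs_mul, abs_mul, abs_of_pos (Real.exp_pos _)]
        _ ≤ B x := add_le_add
            (mul_le_mul_of_nonneg_left e2 (abs_nonneg _))
            (mul_le_mul_of_nonneg_left (hexpd x) (abs_nonneg _))
    have hDint : |(∫ τ in a..b, w τ * Real.exp (-F τ))
          - ∫ τ in a..b, v τ * Real.exp (-Fv τ)|
        ≤ Real.exp K * ε + (K + 1) * (2 * Real.exp (K + 1) * ε) := by
      rw [← intervalIntegral.integral_sub hIw hIvv]
      have h1 : |∫ τ in a..b, (w τ * Real.exp (-F τ) - v τ * Real.exp (-Fv τ))|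
          ≤ ∫ τ in Set.uIoc a b, |w τ * Real.exp (-F τ) - v τ * Real.exp (-Fv τ)| := by
        simpa [Real.norm_eq_abs] using
          intervalIntegral.norm_integral_le_integral_norm_uIoc
            (f := fun τ => w τ * Real.exp (-F τ) - v τ * Real.exp (-Fv τ))
            (a := a) (b := b) (μ := volume)
      have h2 : ∫ τ in Set.uIoc a b, |w τ * Real.exp (-F τ) - v τ * Real.exp (-Fv τ)|
          ≤ ∫ τ in Set.uIoc a b, B τ :=
        setIntegral_mono_on (intervalIntegrable_iff.1 (hIw.sub hIvv).abs)
          hBint.integrableOn measurableSet_uIoc (fun x _ => hptw x)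
      have h3 : ∫ τ in Set.uIoc a b, B τ ≤ ∫ x, B x :=
        setIntegral_le_integral hBint (Filter.Eventually.of_forall hBnn)
      have h4 : ∫ x, B x = (∫ x, |w x - v x|) * Real.exp K
          + (∫ x, |v x|) * (2 * Real.exp (K + 1) * ε) := by
        rw [integral_add (hwv.abs.mul_const _) (hvi.abs.mul_const _),
          integral_mul_const, integral_mul_const]
      have h5 : (∫ x, |w x - v x|) * Real.exp K ≤ ε * Real.exp K :=
        mul_le_mul_of_nonneg_right hdist' (Real.exp_pos _).le
      have h6 : (∫ x, |v x|) * (2 * Real.exp (K + 1) * ε)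
          ≤ (K + 1) * (2 * Real.exp (K + 1) * ε) :=
        mul_le_mul_of_nonneg_right hIvabs (by positivity)
      nlinarith [h1, h2, h3]
    have hkc : (∫ τ in a..b, v τ * Real.exp (-Fv τ))
        = Real.exp (-Fv a) - Real.exp (-Fv b) := key_cont v hvi hvc a b
    have hAeq : A = ((∫ τ in a..b, w τ * Real.exp (-F τ))
          - ∫ τ in a..b, v τ * Real.exp (-Fv τ))
        + ((Real.exp (-Fv a) - Real.exp (-F a)) + (Real.exp (-F b) - Real.exp (-Fv b))) := by
      rw [hA, hkc]; ring
    have ha' := hexpd a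
    have hb' := hexpd b
    have habs : |A| ≤ |(∫ τ in a..b, w τ * Real.exp (-F τ))
          - ∫ τ in a..b, v τ * Real.exp (-Fv τ)|
        + (|Real.exp (-F a) - Real.exp (-Fv a)| + |Real.exp (-F b) - Real.exp (-Fv b)|) := by
      rw [hAeq]
      refine (abs_add_le _ _).trans (add_le_add_right ?_ _)
      refine (abs_add_le _ _).trans ?_
      rw [abs_sub_comm (Real.exp (-Fv a))]
    have hexpK : Real.exp K ≤ Real.exp (K + 1) := Real.exp_le_exp.2 (by linarith)
    rw [hCdef]
    nlinarith [Real.exp_pos (K + 1), hε.le]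
  have hA0 : A = 0 := by
    by_contra hne
    have hpos : 0 < |A| := abs_pos.2 hne
    have h1 : (0:ℝ) < min 1 (|A| / (2 * C)) := lt_min one_pos (by positivity)
    have h2 := main _ h1 (min_le_left _ _)
    have h3 : C * min 1 (|A| / (2 * C)) ≤ C * (|A| / (2 * C)) :=
      mul_le_mul_of_nonneg_left (min_le_right _ _) hC0.le
    have h4 : C * (|A| / (2 * C)) = |A| / 2 := by field_simp
    linarith
  simpa [hA, hF] using sub_eq_zero.1 hA0

lemma ofReal_integral_le {α : Type*} [MeasurableSpace α] {μ : Measure α}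
    {f : α → ℝ} (hf : Integrable f μ) :
    ENNReal.ofReal (∫ x, f x ∂μ) ≤ ∫⁻ x, ENNReal.ofReal (f x) ∂μ := by
  have h1 : ∫ x, f x ∂μ ≤ ∫ x, max (f x) 0 ∂μ :=
    integral_mono hf hf.pos_part fun x => le_max_left _ _
  have h2 : ENNReal.ofReal (∫ x, max (f x) 0 ∂μ) = ∫⁻ x, ENNReal.ofReal (max (f x) 0) ∂μ :=
    ofReal_integral_eq_lintegral_ofReal hf.pos_part
      (Filter.Eventually.of_forall fun x => le_max_right _ _)
  have h3 : ∀ x, ENNReal.ofReal (max (f x) 0) = ENNReal.ofReal (f x) := by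
    intro x
    rcases le_total 0 (f x) with h | h
    · rw [max_eq_left h]
    · rw [max_eq_right h, ENNReal.ofReal_of_nonpos h, ENNReal.ofReal_zero]
  calc ENNReal.ofReal (∫ x, f x ∂μ) ≤ ENNReal.ofReal (∫ x, max (f x) 0 ∂μ) :=
        ENNReal.ofReal_le_ofReal h1
    _ = ∫⁻ x, ENNReal.ofReal (max (f x) 0) ∂μ := h2
    _ = ∫⁻ x, ENNReal.ofReal (f x) ∂μ := by simp only [h3]

/-- Monotonicity of `t ↦ ∫_0^t e^{-∫_0^τ (q-c)} λ(τ) dτ + e^{-∫_0^t (q-c)} V`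
on `[0,∞)`, assuming `λ(τ) ≥ (q(τ) - c(τ)) V + δ` a.e. for some `δ ≥ 0`. -/
theorem stmt_2 (q c : ℝ → ℝ) (lam : ℝ → ℝ≥0∞) (V δ : ℝ)
    (hqm : Measurable q) (hcm : Measurable c) (hlamm : Measurable lam)
    (hq0 : ∀ s, 0 ≤ q s) (hc0 : ∀ s, 0 ≤ c s)
    (hqloc : LocallyIntegrableOn q (Set.Ici 0))
    (hcloc : LocallyIntegrableOn c (Set.Ici 0))
    (hV : 1 ≤ V) (hδ : 0 ≤ δ)
    (hineq : ∀ᵐ τ ∂(volume : Measure ℝ), 0 ≤ τ →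
      ENNReal.ofReal ((q τ - c τ) * V + δ) ≤ lam τ) :
    ∀ t₁ t₂ : ℝ, 0 ≤ t₁ → t₁ ≤ t₂ →
      (∫⁻ τ in Set.Ioc (0:ℝ) t₁,
          ENNReal.ofReal (Real.exp (-(∫ s in Set.Ioc (0:ℝ) τ, (q s - c s)))) * lam τ)
        + ENNReal.ofReal (Real.exp (-(∫ s in Set.Ioc (0:ℝ) t₁, (q s - c s))) * V)
      ≤ (∫⁻ τ in Set.Ioc (0:ℝ) t₂,
          ENNReal.ofReal (Real.exp (-(∫ s in Set.Ioc (0:ℝ) τ, (q s - c s)))) * lam τ)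
        + ENNReal.ofReal (Real.exp (-(∫ s in Set.Ioc (0:ℝ) t₂, (q s - c s))) * V) := by
  intro t₁ t₂ ht₁ ht₁₂
  have ht₂ : (0:ℝ) ≤ t₂ := ht₁.trans ht₁₂
  set g : ℝ → ℝ := fun s => q s - c s with hg
  have hgloc : LocallyIntegrableOn g (Set.Ici 0) := by
    have := hqloc.sub hcloc
    simpa [hg, Pi.sub_def] using this
  have hgInt : IntegrableOn g (Set.Icc 0 t₂) :=
    hgloc.integrableOn_compact_subset (fun x hx => hx.1) isCompact_Icc
  set w : ℝ → ℝ := (Set.Ioc (0:ℝ) t₂).indicator g with hw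
  have hwInt : Integrable w := by
    exact (hgInt.mono_set Set.Ioc_subset_Icc_self).integrable_indicator measurableSet_Ioc
  -- F equals the set integral of g on [0, t₂]
  have hFeq : ∀ τ : ℝ, 0 ≤ τ → τ ≤ t₂ →
      (∫ s in (0:ℝ)..τ, w s) = ∫ s in Set.Ioc (0:ℝ) τ, (q s - c s) := by
    intro τ h0 h2
    rw [intervalIntegral.integral_of_le h0, hw, setIntegral_indicator measurableSet_Ioc,
      Set.inter_eq_left.2 (Set.Ioc_subset_Ioc le_rfl h2)]
  have hkey := key w hwInt t₁ t₂
  rw [hFeq t₁ ht₁ ht₁₂, hFeq t₂ ht₂ le_rfl] at hkey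
  -- convert interval integral to set integral and replace w by q - c inside
  have hset : (∫ τ in t₁..t₂, w τ * Real.exp (-(∫ s in (0:ℝ)..τ, w s)))
      = ∫ τ in Set.Ioc t₁ t₂,
          (q τ - c τ) * Real.exp (-(∫ s in Set.Ioc (0:ℝ) τ, (q s - c s))) := by
    rw [intervalIntegral.integral_of_le ht₁₂]
    refine setIntegral_congr_fun measurableSet_Ioc fun τ hτ => ?_
    have h0τ : 0 ≤ τ := le_of_lt (lt_of_le_of_lt ht₁ hτ.1)
    rw [hFeq τ h0τ hτ.2, hw,
      Set.indicator_of_mem (Set.mem_Ioc.2 ⟨lt_of_le_of_lt ht₁ hτ.1, hτ.2⟩)]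
  rw [hset] at hkey
  -- abbreviations
  set E₁ : ℝ := Real.exp (-(∫ s in Set.Ioc (0:ℝ) t₁, (q s - c s))) with hE₁
  set E₂ : ℝ := Real.exp (-(∫ s in Set.Ioc (0:ℝ) t₂, (q s - c s))) with hE₂
  set Φ : ℝ → ℝ≥0∞ := fun τ =>
    ENNReal.ofReal (Real.exp (-(∫ s in Set.Ioc (0:ℝ) τ, (q s - c s)))) * lam τ with hΦ
  -- split the lintegral
  have hsplit : (∫⁻ τ in Set.Ioc (0:ℝ) t₂, Φ τ)
      = (∫⁻ τ in Set.Ioc (0:ℝ) t₁, Φ τ) + ∫⁻ τ in Set.Ioc t₁ t₂, Φ τ := by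
    rw [← Set.Ioc_union_Ioc_eq_Ioc ht₁ ht₁₂,
      lintegral_union measurableSet_Ioc (Set.Ioc_disjoint_Ioc_of_le le_rfl)]
  rw [hsplit, add_assoc]
  refine add_le_add_right ?_ _
  rw [add_comm]
  -- main inequality: ofReal (E₁ V) ≤ ofReal (E₂ V) + ∫⁻ over (t₁, t₂]
  have step1 : ENNReal.ofReal (E₁ * V)
      ≤ ENNReal.ofReal (E₂ * V) + ENNReal.ofReal ((E₁ - E₂) * V) := by
    have : E₁ * V = E₂ * V + (E₁ - E₂) * V := by ring
    rw [this]
    exact ENNReal.ofReal_add_le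
  refine step1.trans (add_le_add_right ?_ _)
  -- integrability of the integrand on (t₁, t₂]
  have hcontF : Continuous fun τ => Real.exp (-(∫ s in (0:ℝ)..τ, w s)) :=
    Real.continuous_exp.comp
      (intervalIntegral.continuous_primitive (fun a b => hwInt.intervalIntegrable) 0).neg
  have hII : IntervalIntegrable
      (fun τ => w τ * Real.exp (-(∫ s in (0:ℝ)..τ, w s)) * V) volume t₁ t₂ :=
    (hwInt.intervalIntegrable.mul_continuousOn hcontF.continuousOn).mul_const V
  have hIntOn : IntegrableOn
      (fun τ => (q τ - c τ) * Real.exp (-(∫ s in Set.Ioc (0:ℝ) τ, (q s - c s))) * V)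
      (Set.Ioc t₁ t₂) := by
    have h1 : IntegrableOn
        (fun τ => w τ * Real.exp (-(∫ s in (0:ℝ)..τ, w s)) * V) (Set.Ioc t₁ t₂) := by
      have := intervalIntegrable_iff.1 hII
      rwa [Set.uIoc_of_le ht₁₂] at this
    refine h1.congr_fun (fun τ hτ => ?_) measurableSet_Ioc
    have h0τ : 0 ≤ τ := le_of_lt (lt_of_le_of_lt ht₁ hτ.1)
    beta_reduce
    rw [hFeq τ h0τ hτ.2, hw,
      Set.indicator_of_mem (Set.mem_Ioc.2 ⟨lt_of_le_of_lt ht₁ hτ.1, hτ.2⟩)]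
  -- chain in ℝ≥0∞
  have step2 : ENNReal.ofReal ((E₁ - E₂) * V)
      = ENNReal.ofReal (∫ τ in Set.Ioc t₁ t₂,
          (q τ - c τ) * Real.exp (-(∫ s in Set.Ioc (0:ℝ) τ, (q s - c s))) * V) := by
    rw [integral_mul_const, hkey]
  have step3 : ENNReal.ofReal (∫ τ in Set.Ioc t₁ t₂,
        (q τ - c τ) * Real.exp (-(∫ s in Set.Ioc (0:ℝ) τ, (q s - c s))) * V)
      ≤ ∫⁻ τ in Set.Ioc t₁ t₂, ENNReal.ofReal
          ((q τ - c τ) * Real.exp (-(∫ s in Set.Ioc (0:ℝ) τ, (q s - c s))) * V) :=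
    ofReal_integral_le hIntOn
  have step4 : (∫⁻ τ in Set.Ioc t₁ t₂, ENNReal.ofReal
        ((q τ - c τ) * Real.exp (-(∫ s in Set.Ioc (0:ℝ) τ, (q s - c s))) * V))
      ≤ ∫⁻ τ in Set.Ioc t₁ t₂, Φ τ := by
    refine lintegral_mono_ae ((ae_restrict_iff' measurableSet_Ioc).2 ?_)
    filter_upwards [hineq] with τ hτ hmem
    have h0τ : 0 ≤ τ := le_of_lt (lt_of_le_of_lt ht₁ hmem.1)
    have hlam := hτ h0τ
    set e : ℝ := Real.exp (-(∫ s in Set.Ioc (0:ℝ) τ, (q s - c s))) with he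
    have h1 : (q τ - c τ) * e * V = e * ((q τ - c τ) * V) := by ring
    rw [hΦ, h1, ENNReal.ofReal_mul (Real.exp_pos _).le]
    refine mul_le_mul_right ?_ _
    exact (ENNReal.ofReal_le_ofReal (by linarith)).trans hlam
  exact (step2.le.trans step3).trans step4
end

section
/- Let $w : X \to [1, \infty)$, $c : X \times A \to [0, \infty)$, $q_x : A \to [0, \infty)$, $\lambda : X \times A \to [0,\infty]$ with $c(x,a) + q_x(a) + 1 \leq w(x)$ for all $(x,a)$. Fix $x$ with $V(x) < \infty$ where $V : X \to [1,\infty]$, and suppose $\inf_{a \in A} \{ \lambda(x,a) - (q_x(a) - c(x,a)) V(x) \} = 0$. Then $V(x) = \inf_{a \in A} \frac{w(x)}{w(x) - c(x,a)} \left( \frac{\lambda(x,a) - q_x(a) V(x)}{w(x)} + V(x) \right)$. -/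
open scoped ENNReal

/-- Equality case of Lemma 5: if the continuous-time gradual optimality equation holds
with equality at `x` (`inf_a {λ(x,a) - (q_x(a)-c(x,a)) V(x)} = 0`), then the uniformized
discrete-time optimality equation holds with equality at `x`. -/
theorem stmt_5 {X A : Type*} (w : X → ℝ) (c : X → A → ℝ) (q : X → A → ℝ)
    (lam : X → A → ℝ≥0∞) (V : X → ℝ≥0∞)
    (hc0 : ∀ x a, 0 ≤ c x a) (hq0 : ∀ x a, 0 ≤ q x a)
    (hw : ∀ x a, c x a + q x a + 1 ≤ w x)
    (hw1 : ∀ x, 1 ≤ w x) (hV1 : ∀ x, 1 ≤ V x)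
    (x : X) (hVx : V x < ⊤)
    (heq : (⨅ a : A, (lam x a).toEReal
        - (((q x a - c x a) * (V x).toReal : ℝ) : EReal)) = 0) :
    (((V x).toReal : ℝ) : EReal) =
      ⨅ a : A, ((w x / (w x - c x a) : ℝ) : EReal) *
        (((lam x a).toEReal - ((q x a * (V x).toReal : ℝ) : EReal))
            * (((w x)⁻¹ : ℝ) : EReal)
          + (((V x).toReal : ℝ) : EReal)) := by
  set v : ℝ := (V x).toReal with hv
  set g : A → EReal := fun a => (lam x a).toEReal - (((q x a - c x a) * v : ℝ) : EReal)
    with hgdef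
  have hg0 : ∀ a, (0 : EReal) ≤ g a := fun a => heq ▸ iInf_le _ a
  have hW : ∀ a : A, (0:ℝ) < w x := fun a => lt_of_lt_of_le one_pos (hw1 x)
  have hWC : ∀ a : A, (1:ℝ) ≤ w x - c x a := by
    intro a; have := hw x a; have := hq0 x a; linarith
  have key : ∀ a : A, ((w x / (w x - c x a) : ℝ) : EReal) *
      (((lam x a).toEReal - ((q x a * v : ℝ) : EReal)) * (((w x)⁻¹ : ℝ) : EReal)
        + ((v : ℝ) : EReal))
      = ((v:ℝ):EReal) + g a * (((w x - c x a)⁻¹ : ℝ) : EReal) := by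
    intro a
    have hW' := hW a
    have hWC' : (0:ℝ) < w x - c x a := lt_of_lt_of_le one_pos (hWC a)
    have hr : (0:ℝ) < w x / (w x - c x a) := div_pos hW' hWC'
    rcases eq_top_or_lt_top (lam x a) with h | h
    · rw [hgdef]
      simp only [h, EReal.coe_ennreal_top, EReal.top_sub_coe,
        EReal.top_mul_coe_of_pos (inv_pos.mpr hW'), EReal.top_add_coe,
        EReal.coe_mul_top_of_pos hr,
        EReal.top_mul_coe_of_pos (inv_pos.mpr hWC'), EReal.coe_add_top]
    · set L : ℝ := (lam x a).toReal with hL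
      have hlam : ((lam x a : ℝ≥0∞) : EReal) = ((L : ℝ) : EReal) := by
        rw [hL, ← EReal.toReal_coe_ennreal]
        exact (EReal.coe_toReal (EReal.coe_ennreal_eq_top_iff.not.mpr h.ne)
          (EReal.coe_ennreal_ne_bot _)).symm
      rw [hgdef]
      simp only [hlam, ← EReal.coe_sub, ← EReal.coe_mul, ← EReal.coe_add]
      norm_cast
      field_simp
      ring
  rw [show (⨅ a : A, ((w x / (w x - c x a) : ℝ) : EReal) *
        (((lam x a).toEReal - ((q x a * v : ℝ) : EReal)) * (((w x)⁻¹ : ℝ) : EReal)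
          + ((v : ℝ) : EReal)))
      = ⨅ a : A, ((v:ℝ):EReal) + g a * (((w x - c x a)⁻¹ : ℝ) : EReal)
    from iInf_congr key]
  haveI : Nonempty A := by
    by_contra h
    rw [not_nonempty_iff] at h
    simp [iInf_of_empty] at heq
  refine le_antisymm (le_iInf fun a => ?_) ?_
  · have hprod : (0:EReal) ≤ g a * (((w x - c x a)⁻¹ : ℝ) : EReal) := by
      rcases (hg0 a).eq_or_lt with h | h
      · rw [← h, zero_mul]
      · exact le_of_lt (EReal.mul_pos h (by
          exact_mod_cast inv_pos.mpr (lt_of_lt_of_le one_pos (hWC a))))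
    calc ((v:ℝ):EReal) = ((v:ℝ):EReal) + 0 := (add_zero _).symm
      _ ≤ _ := add_le_add_right hprod _
  · by_contra hlt
    push_neg at hlt
    obtain ⟨z, hz1, hz2⟩ := exists_between hlt
    have hzt : z ≠ ⊤ := (hz2.trans_le le_top).ne
    have hzb : z ≠ ⊥ := (lt_of_le_of_lt bot_le hz1).ne'
    lift z to ℝ using ⟨hzt, hzb⟩
    have hε : (0:ℝ) < z - v := by exact_mod_cast sub_pos.mpr (EReal.coe_lt_coe_iff.mp hz1)
    have hlt2 : (⨅ a, g a) < ((z - v : ℝ) : EReal) := by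
      rw [heq]; exact_mod_cast hε
    obtain ⟨a, ha⟩ := iInf_lt_iff.mp hlt2
    have hgt : g a ≠ ⊤ := (ha.trans_le le_top).ne
    have hgb : g a ≠ ⊥ := (lt_of_lt_of_le (EReal.bot_lt_zero) (hg0 a)).ne'
    set t : ℝ := (g a).toReal with ht
    have hgat : g a = ((t : ℝ) : EReal) := (EReal.coe_toReal hgt hgb).symm
    have ht0 : (0:ℝ) ≤ t := by
      have := hg0 a; rw [hgat] at this; exact_mod_cast this
    have htε : t < z - v := by
      rw [hgat] at ha; exact_mod_cast ha
    have hWC' : (0:ℝ) < w x - c x a := lt_of_lt_of_le one_pos (hWC a)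
    have hterm : ((v:ℝ):EReal) + g a * (((w x - c x a)⁻¹ : ℝ) : EReal)
        = ((v + t * (w x - c x a)⁻¹ : ℝ) : EReal) := by
      rw [hgat]; norm_cast
    have hle : (v + t * (w x - c x a)⁻¹ : ℝ) < z := by
      have hr1 : (w x - c x a)⁻¹ ≤ 1 := by
        rw [inv_le_one_iff₀]; right; exact hWC a
      nlinarith [mul_le_of_le_one_right ht0 hr1]
    have : (⨅ a, ((v:ℝ):EReal) + g a * (((w x - c x a)⁻¹ : ℝ) : EReal)) < (z:EReal) := by
      refine lt_of_le_of_lt (iInf_le _ a) ?_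
      rw [hterm]; exact_mod_cast hle
    exact absurd (hz2.trans this) (lt_irrefl _)
end
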